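/- Let B ⊂ A be an inclusion of simple unital C*-algebras with a conditional expectation of index-finite type. Then the reflection operator r⁻₁ maps A'∩A_1 onto A_1'∩A_2, i.e. r⁻₁(A'∩A_1) = A_1'∩A_2. -/

import Mathlib

open scoped TensorProduct

noncomputable section

/-- A unital C*-algebra is *simple* if it has no nontrivial closed two-sided ideals. -/
def IsSimpleCStarAlgebra (A : Type*) [Ring A] [TopologicalSpace A] : Prop :=
  ∀ I : TwoSidedIdeal A, IsClosed (I : Set A) → I = ⊥ ∨ I = ⊤

/-- A conditional expectation from the subalgebra `A` of the ambient algebra `C`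
onto its subalgebra `B`, recorded as a linear map on `C`. -/
structure CondExpOn (C : Type*) [CStarAlgebra C] (A B : StarSubalgebra ℂ C) where
  map : C →ₗ[ℂ] C
  mem_of_mem : ∀ x ∈ A, map x ∈ B
  fixes : ∀ x ∈ B, map x = x
  bimodule : ∀ b ∈ B, ∀ b' ∈ B, ∀ x ∈ A, map (b * x * b') = b * map x * b'
  star_map : ∀ x ∈ A, map (star x) = star (map x)
  positive : ∀ x ∈ A, ∃ y ∈ B, map (star x * x) = star y * y

/-- A (Watatani) quasi-basis for an expectation-like map `E` on the set `S`:
`∑ᵢ uᵢ E(uᵢ* y) = y = ∑ᵢ E(y uᵢ) uᵢ*` for all `y ∈ S`.  The existence of a quasi-basis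
is the statement that the corresponding conditional expectation is of index-finite type. -/
structure IsQuasiBasisOn {C : Type*} [CStarAlgebra C] (E : C →ₗ[ℂ] C) (S : Set C)
    {n : ℕ} (u : Fin n → C) : Prop where
  mem : ∀ i, u i ∈ S
  left : ∀ y ∈ S, ∑ i, u i * E (star (u i) * y) = y
  right : ∀ y ∈ S, ∑ i, E (y * u i) * star (u i) = y

/-- The relative commutant `M' ∩ N` inside the ambient algebra `C`. -/
def relativeCommutant {C : Type*} [CStarAlgebra C] (M N : StarSubalgebra ℂ C) :
    Submodule ℂ C where
  carrier := {x | x ∈ N ∧ ∀ m ∈ M, m * x = x * m}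
  add_mem' := fun hx hy => ⟨add_mem hx.1 hy.1,
    fun m hm => by rw [mul_add, add_mul, hx.2 m hm, hy.2 m hm]⟩
  zero_mem' := ⟨zero_mem _, fun m _ => by rw [mul_zero, zero_mul]⟩
  smul_mem' := fun c x hx => ⟨SMulMemClass.smul_mem c hx.1,
    fun m hm => by rw [mul_smul_comm, smul_mul_assoc, hx.2 m hm]⟩

/-- The pairing of two linear functionals against a tensor:
`pairT f g (a ⊗ b) = f a * g b`. -/
def pairT {C : Type*} [CStarAlgebra C] (f g : C →ₗ[ℂ] ℂ) : C ⊗[ℂ] C →ₗ[ℂ] ℂ :=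
  (TensorProduct.lid ℂ ℂ).toLinearMap ∘ₗ TensorProduct.map f g

/-- `(ε ⊗ id)` applied to a tensor. -/
def counitL {C : Type*} [CStarAlgebra C] (ε : C →ₗ[ℂ] ℂ) : C ⊗[ℂ] C →ₗ[ℂ] C :=
  (TensorProduct.lid ℂ C).toLinearMap ∘ₗ TensorProduct.map ε LinearMap.id

/-- `(id ⊗ ε)` applied to a tensor. -/
def counitR {C : Type*} [CStarAlgebra C] (ε : C →ₗ[ℂ] ℂ) : C ⊗[ℂ] C →ₗ[ℂ] C :=
  (TensorProduct.rid ℂ C).toLinearMap ∘ₗ TensorProduct.map LinearMap.id ε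

/-- Sweedler expression `t ↦ ε(t₍₁₎ w) t₍₂₎`; applied to `Δ(1)` this is the
target counital map `ε^t(w) = ε(1₍₁₎ w) 1₍₂₎`. -/
def ctarget {C : Type*} [CStarAlgebra C] (ε : C →ₗ[ℂ] ℂ) (w : C) : C ⊗[ℂ] C →ₗ[ℂ] C :=
  (TensorProduct.lid ℂ C).toLinearMap ∘ₗ
    TensorProduct.map (ε ∘ₗ LinearMap.mulRight ℂ w) LinearMap.id

/-- Sweedler expression `t ↦ t₍₁₎ ε(w t₍₂₎)`; applied to `Δ(1)` this is the
source counital map `ε^s(w) = 1₍₁₎ ε(w 1₍₂₎)`. -/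
def csource {C : Type*} [CStarAlgebra C] (ε : C →ₗ[ℂ] ℂ) (w : C) : C ⊗[ℂ] C →ₗ[ℂ] C :=
  (TensorProduct.rid ℂ C).toLinearMap ∘ₗ
    TensorProduct.map LinearMap.id (ε ∘ₗ LinearMap.mulLeft ℂ w)

/-- The tower `B ⊆ A ⊆ A₁ ⊆ A₂` of iterated C*-basic constructions associated to an
inclusion `B ⊆ A` of simple unital C*-algebras (all realized inside an ambient unital
C*-algebra `C`), together with:  the minimal conditional expectations `E₀ : A → B`,
`E₁ : A₁ → A`, `E₂ : A₂ → A₁`, all of index-finite type;  a quasi-basis `lam` for `E₀`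
with scalar index `τ⁻¹` (minimal, i.e. of smallest index);  the Jones projections
`e₁, e₂`;  the Markov-type trace `tr` given on `B' ∩ A₂` by `E₀ ∘ E₁ ∘ E₂`;  and a
quasi-basis `u` for the restriction of `E₁` to the relative commutant `A' ∩ A₁`, whose
Watatani index `k = ∑ uᵢuᵢ*` is invertible with inverse `kinv`. -/
structure JonesTower (C : Type*) [CStarAlgebra C] where
  B : StarSubalgebra ℂ C
  A : StarSubalgebra ℂ C
  A1 : StarSubalgebra ℂ C
  A2 : StarSubalgebra ℂ C
  hBA : B ≤ A
  hAA1 : A ≤ A1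
  hA1A2 : A1 ≤ A2
  simpleB : IsSimpleCStarAlgebra B
  simpleA : IsSimpleCStarAlgebra A
  E0 : CondExpOn C A B
  E1 : CondExpOn C A1 A
  E2 : CondExpOn C A2 A1
  τ : ℝ
  τ_pos : 0 < τ
  nl : ℕ
  lam : Fin nl → C
  lam_qb : IsQuasiBasisOn E0.map (A : Set C) lam
  qb1 : ∃ (n : ℕ) (v : Fin n → C), IsQuasiBasisOn E1.map (A1 : Set C) v
  qb2 : ∃ (n : ℕ) (v : Fin n → C), IsQuasiBasisOn E2.map (A2 : Set C) v
  lam_index : ∑ i, lam i * star (lam i) = ((τ⁻¹ : ℝ) : ℂ) • 1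
  E0_minimal : ∀ (E' : CondExpOn C A B) (n : ℕ) (v : Fin n → C) (c : ℝ),
      IsQuasiBasisOn E'.map (A : Set C) v →
      (∑ i, v i * star (v i)) = ((c : ℝ) : ℂ) • 1 → τ⁻¹ ≤ c
  e1 : C
  e2 : C
  e1_mem : e1 ∈ A1
  e2_mem : e2 ∈ A2
  e1_star : star e1 = e1
  e2_star : star e2 = e2
  e1_idem : e1 * e1 = e1
  e2_idem : e2 * e2 = e2
  e1_comm : ∀ b ∈ B, e1 * b = b * e1
  e2_comm : ∀ a ∈ A, e2 * a = a * e2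
  e1_jones : ∀ x ∈ A, e1 * x * e1 = E0.map x * e1
  e2_jones : ∀ x ∈ A1, e2 * x * e2 = E1.map x * e2
  E1_e1 : E1.map e1 = ((τ : ℝ) : ℂ) • 1
  E2_e2 : E2.map e2 = ((τ : ℝ) : ℂ) • 1
  gen1 : A1 = (StarAlgebra.adjoin ℂ ((A : Set C) ∪ {e1})).topologicalClosure
  gen2 : A2 = (StarAlgebra.adjoin ℂ ((A1 : Set C) ∪ {e2})).topologicalClosure
  tr : C →ₗ[ℂ] ℂ
  tr_def : ∀ x ∈ A2, (∀ b ∈ B, b * x = x * b) →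
      E0.map (E1.map (E2.map x)) = tr x • 1
  nu : ℕ
  u : Fin nu → C
  u_qb : IsQuasiBasisOn E1.map {x | x ∈ A1 ∧ ∀ a ∈ A, a * x = x * a} u
  kinv : C
  kinv_k : kinv * (∑ i, u i * star (u i)) = 1
  k_kinv : (∑ i, u i * star (u i)) * kinv = 1

namespace JonesTower

variable {C : Type*} [CStarAlgebra C] (T : JonesTower C)

/-- The relative commutant `P = B' ∩ A₁`. -/
def P : Submodule ℂ C := relativeCommutant T.B T.A1

/-- The relative commutant `Q = A' ∩ A₂`. -/
def Q : Submodule ℂ C := relativeCommutant T.A T.A2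

/-- `k = Ind_W (E₁|_{A' ∩ A₁}) = ∑ᵢ uᵢ uᵢ*`, the Watatani index of the restriction of
`E₁` to `A' ∩ A₁`. -/
def k : C := ∑ i, T.u i * star (T.u i)

/-- `d = ‖k‖₂ = tr(k* k)^{1/2}`. -/
def d : ℝ := Real.sqrt (T.tr (star T.k * T.k)).re

/-- The Nikshych–Vainerman pairing `⟨x, w⟩ = d τ⁻² tr(x e₂ e₁ w)`. -/
def pairNV (x w : C) : ℂ :=
  (T.d : ℂ) * ((T.τ : ℂ)⁻¹) ^ 2 * T.tr (x * T.e2 * T.e1 * w)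

/-- The NV pairing as a linear functional in its second variable. -/
def pairL (x : C) : C →ₗ[ℂ] ℂ :=
  ((T.d : ℂ) * ((T.τ : ℂ)⁻¹) ^ 2) • (T.tr ∘ₗ LinearMap.mulLeft ℂ (x * T.e2 * T.e1))

/-- The NV pairing as a linear functional in its first variable. -/
def pairR (w : C) : C →ₗ[ℂ] ℂ :=
  ((T.d : ℂ) * ((T.τ : ℂ)⁻¹) ^ 2) • (T.tr ∘ₗ LinearMap.mulRight ℂ (T.e2 * (T.e1 * w)))

/-- The subspace `Q ⊗ Q` of `C ⊗ C`. -/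
def QQ : Submodule ℂ (C ⊗[ℂ] C) :=
  Submodule.span ℂ {t | ∃ a ∈ T.Q, ∃ b ∈ T.Q, t = a ⊗ₜ[ℂ] b}

/-- The subspace `P ⊗ P` of `C ⊗ C`. -/
def PP : Submodule ℂ (C ⊗[ℂ] C) :=
  Submodule.span ℂ {t | ∃ a ∈ T.P, ∃ b ∈ T.P, t = a ⊗ₜ[ℂ] b}

/-- The reflection operator `r⁻₁(w) = τ⁻² ∑ᵢ λᵢ e₁ e₂ E₂(w e₁ e₂ λᵢ*)`. -/
def rminus (w : C) : C :=
  (((T.τ : ℂ)⁻¹) ^ 2) •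
    ∑ i, T.lam i * T.e1 * T.e2 * T.E2.map (w * T.e1 * T.e2 * star (T.lam i))

/-- The reflection operator `r⁺₁(x) = τ⁻¹ ∑ᵢ E₁(e₁ λᵢ x) e₁ λᵢ*`. -/
def rplus (x : C) : C :=
  ((T.τ : ℂ)⁻¹) • ∑ i, T.E1.map (T.e1 * T.lam i * x) * T.e1 * star (T.lam i)

/-- The inclusion `B ⊆ A` has depth 2: `(B' ∩ A₁) e₂ (B' ∩ A₁) = B' ∩ A₂`
(as linear spans). -/
def DepthTwo : Prop :=
  Submodule.span ℂ {z | ∃ x ∈ T.P, ∃ y ∈ T.P, z = x * T.e2 * y} =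
    relativeCommutant T.B T.A2

/-- The comultiplication, counit and antipode on `Q = A' ∩ A₂` determined by the
Nikshych–Vainerman pairing:  `⟨x₁x₂, w⟩ = ⟨x₁, w₍₁₎⟩⟨x₂, w₍₂₎⟩`,  `ε(w) = ⟨1, w⟩`, and
`⟨x, S(w)⟩ = conj ⟨x*, w*⟩`. -/
structure NVData where
  Δ : C →ₗ[ℂ] C ⊗[ℂ] C
  ε : C →ₗ[ℂ] ℂ
  S : C →ₗ[ℂ] C
  Δ_mem : ∀ w ∈ T.Q, Δ w ∈ T.QQ
  S_mem : ∀ w ∈ T.Q, S w ∈ T.Q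
  Δ_pair : ∀ x₁ ∈ T.P, ∀ x₂ ∈ T.P, ∀ w ∈ T.Q,
      T.pairNV (x₁ * x₂) w = pairT (T.pairL x₁) (T.pairL x₂) (Δ w)
  ε_pair : ∀ w ∈ T.Q, ε w = T.pairNV 1 w
  S_pair : ∀ x ∈ T.P, ∀ w ∈ T.Q,
      T.pairNV x (S w) = starRingEnd ℂ (T.pairNV (star x) (star w))

variable {T}

/-- The deformed comultiplication `Δ̃(w) = d (1 ⊗ k⁻¹) Δ(w)`. -/
def tΔ (D : T.NVData) : C →ₗ[ℂ] C ⊗[ℂ] C :=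
  (T.d : ℂ) • ((LinearMap.mulLeft ℂ ((1 : C) ⊗ₜ[ℂ] T.kinv)) ∘ₗ D.Δ)

/-- The deformed counit `ε̃(w) = d⁻¹ ε(k w)`. -/
def tε (D : T.NVData) : C →ₗ[ℂ] ℂ :=
  ((T.d : ℂ))⁻¹ • (D.ε ∘ₗ LinearMap.mulLeft ℂ T.k)

/-- The deformed antipode `S̃(w) = S(k w k⁻¹)`. -/
def tS (D : T.NVData) : C →ₗ[ℂ] C :=
  D.S ∘ₗ (LinearMap.mulRight ℂ T.kinv ∘ₗ LinearMap.mulLeft ℂ T.k)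

end JonesTower

/-- `(Q, Δ, ε, S)` is a weak C*-Hopf algebra, where `Q` is a (necessarily
finite-dimensional) subspace of the ambient C*-algebra `C`, `dag` is the involution of
`Q` and `dagT` is the induced componentwise involution of `Q ⊗ Q`.  This records:
`Q` is a unital algebra, `dag` is an (isometrically positive-definite, i.e. C*-)
involution, `Δ` is a `dag`-preserving algebra map, `(Q, Δ, ε)` is a coalgebra,
the weak bialgebra axioms for `ε` and `Δ(1)`, and the antipode axioms for `S`. -/
structure IsWeakCStarHopfOn {C : Type*} [CStarAlgebra C]
    (Qc : Submodule ℂ C) (QQc : Submodule ℂ (C ⊗[ℂ] C))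
    (dag : C →ₛₗ[starRingEnd ℂ] C) (dagT : C ⊗[ℂ] C → C ⊗[ℂ] C)
    (Δ : C →ₗ[ℂ] C ⊗[ℂ] C) (ε : C →ₗ[ℂ] ℂ) (S : C →ₗ[ℂ] C) : Prop where
  one_mem : (1 : C) ∈ Qc
  mul_mem : ∀ w ∈ Qc, ∀ w' ∈ Qc, w * w' ∈ Qc
  findim : FiniteDimensional ℂ Qc
  dag_mem : ∀ w ∈ Qc, dag w ∈ Qc
  dag_invol : ∀ w ∈ Qc, dag (dag w) = w
  dag_mul : ∀ w ∈ Qc, ∀ w' ∈ Qc, dag (w * w') = dag w' * dag w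
  dag_cstar : ∀ w ∈ Qc, dag w * w = 0 → w = 0
  Δ_mem : ∀ w ∈ Qc, Δ w ∈ QQc
  S_mem : ∀ w ∈ Qc, S w ∈ Qc
  Δ_mul : ∀ w ∈ Qc, ∀ w' ∈ Qc, Δ (w * w') = Δ w * Δ w'
  Δ_star : ∀ w ∈ Qc, Δ (dag w) = dagT (Δ w)
  coassoc : ∀ w ∈ Qc,
      (TensorProduct.assoc ℂ C C C) ((TensorProduct.map Δ LinearMap.id) (Δ w))
        = (TensorProduct.map LinearMap.id Δ) (Δ w)
  counit_left : ∀ w ∈ Qc, counitL ε (Δ w) = w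
  counit_right : ∀ w ∈ Qc, counitR ε (Δ w) = w
  eps_weak : ∀ w ∈ Qc, ∀ w' ∈ Qc, ∀ w'' ∈ Qc,
      ε (w * w' * w'') =
        pairT (ε ∘ₗ LinearMap.mulLeft ℂ w) (ε ∘ₗ LinearMap.mulRight ℂ w'') (Δ w')
  eps_weak' : ∀ w ∈ Qc, ∀ w' ∈ Qc, ∀ w'' ∈ Qc,
      ε (w * w' * w'') =
        pairT (ε ∘ₗ LinearMap.mulRight ℂ w'') (ε ∘ₗ LinearMap.mulLeft ℂ w) (Δ w')
  delta_one_left :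
      (TensorProduct.assoc ℂ C C C).symm ((TensorProduct.map LinearMap.id Δ) (Δ 1))
        = ((Δ 1) ⊗ₜ[ℂ] (1 : C)) *
            ((TensorProduct.assoc ℂ C C C).symm ((1 : C) ⊗ₜ[ℂ] (Δ 1)))
  delta_one_right :
      (TensorProduct.assoc ℂ C C C).symm ((TensorProduct.map LinearMap.id Δ) (Δ 1))
        = ((TensorProduct.assoc ℂ C C C).symm ((1 : C) ⊗ₜ[ℂ] (Δ 1))) *
            ((Δ 1) ⊗ₜ[ℂ] (1 : C))
  antipode_left : ∀ w ∈ Qc,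
      LinearMap.mul' ℂ C ((TensorProduct.map LinearMap.id S) (Δ w)) = ctarget ε w (Δ 1)
  antipode_right : ∀ w ∈ Qc,
      LinearMap.mul' ℂ C ((TensorProduct.map S LinearMap.id) (Δ w)) = csource ε w (Δ 1)
  antipode_mid : ∀ w ∈ Qc,
      LinearMap.mul' ℂ C
        ((TensorProduct.map (LinearMap.mul' ℂ C ∘ₗ TensorProduct.map S LinearMap.id) S)
          ((TensorProduct.map Δ LinearMap.id) (Δ w))) = S w

/-- A left action of a weak C*-Hopf algebra `(Hc, Δ, ε, S, dag)` (realized inside the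
ambient algebra `C`) on the C*-subalgebra `Ac`, given as a bilinear map `act`. -/
structure IsWeakHopfActionOn {C : Type*} [CStarAlgebra C]
    (Hc : Submodule ℂ C) (Ac : StarSubalgebra ℂ C)
    (Δ : C →ₗ[ℂ] C ⊗[ℂ] C) (ε : C →ₗ[ℂ] ℂ) (S : C →ₗ[ℂ] C) (dag : C → C)
    (act : C →ₗ[ℂ] C →ₗ[ℂ] C) : Prop where
  act_mem : ∀ y ∈ Hc, ∀ a ∈ Ac, act y a ∈ Ac
  one_act : ∀ a ∈ Ac, act 1 a = a
  mul_act : ∀ y ∈ Hc, ∀ y' ∈ Hc, ∀ a ∈ Ac, act (y * y') a = act y (act y' a)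
  leibniz : ∀ y ∈ Hc, ∀ a ∈ Ac, ∀ a' ∈ Ac,
      act y (a * a') =
        LinearMap.mul' ℂ C ((TensorProduct.map (act.flip a) (act.flip a')) (Δ y))
  star_act : ∀ y ∈ Hc, ∀ a ∈ Ac, star (act y a) = act (dag (S y)) (star a)
  unit_act : ∀ y ∈ Hc, act y 1 = act (ctarget ε y (Δ 1)) 1
  unit_act_zero : ∀ y ∈ Hc, (act y 1 = 0 ↔ ctarget ε y (Δ 1) = 0)
/-- The conjugate-linear involution `w ↦ gi (star w) g` of `C` (for `gi = g⁻¹` this is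
the involution `w† = g⁻¹ w* g`). -/
def conjStar {C : Type*} [CStarAlgebra C] (g gi : C) : C →ₛₗ[starRingEnd ℂ] C where
  toFun w := gi * star w * g
  map_add' w w' := by (try dsimp only); rw [star_add, mul_add, add_mul]
  map_smul' c w := by
    simp only [star_smul, mul_smul_comm, smul_mul_assoc, starRingEnd_apply]

/-- The map `(x, a) ↦ x₍₁₎ a S(x₍₂₎)`, as a bilinear map, built from a comultiplication
`Δ` and an antipode `S`. -/
def hopfAct {C : Type*} [CStarAlgebra C] (Δ : C →ₗ[ℂ] C ⊗[ℂ] C) (S : C →ₗ[ℂ] C) :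
    C →ₗ[ℂ] C →ₗ[ℂ] C :=
  LinearMap.mk₂ ℂ
    (fun x a =>
      LinearMap.mul' ℂ C ((TensorProduct.map ((LinearMap.mul ℂ C).flip a) S) (Δ x)))
    (fun x x' a => by simp)
    (fun c x a => by simp)
    (fun x a a' => by simp [TensorProduct.map_add_left])
    (fun c x a => by simp [TensorProduct.map_smul_left])

namespace JonesTower

variable {C : Type*} [CStarAlgebra C]

/-- The action `w ▷ x = τ⁻¹ E₂(w x e₂)` of `Q = A' ∩ A₂` on `A₁`, as a bilinear map. -/
def qact (T : JonesTower C) : C →ₗ[ℂ] C →ₗ[ℂ] C :=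
  LinearMap.mk₂ ℂ (fun w x => (T.τ : ℂ)⁻¹ • T.E2.map (w * x * T.e2))
    (fun w w' x => by (try dsimp only); rw [add_mul, add_mul, map_add, smul_add])
    (fun c w x => by (try dsimp only); rw [smul_mul_assoc, smul_mul_assoc, map_smul, smul_comm])
    (fun w x x' => by (try dsimp only); rw [mul_add, add_mul, map_add, smul_add])
    (fun c w x => by (try dsimp only); rw [mul_smul_comm, smul_mul_assoc, map_smul, smul_comm])

/-- The weak C*-Hopf algebra structure `(Δ_P, ε_P, S_P)` on `P = B' ∩ A₁` which is dual,
via the Nikshych–Vainerman pairing, to the deformed weak C*-Hopf algebra structure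
`(Q, Δ̃, ε̃, S̃)`:  the multiplication of `P` is dual to `Δ̃`, the comultiplication of `P`
is dual to the multiplication of `Q`, the counit of `P` is evaluation against `1 ∈ Q`,
the unit of `P` pairs as `ε̃`, and the antipode of `P` is dual to `S̃`. -/
structure DualData (T : JonesTower C) (D : T.NVData) where
  ΔP : C →ₗ[ℂ] C ⊗[ℂ] C
  εP : C →ₗ[ℂ] ℂ
  SP : C →ₗ[ℂ] C
  ΔP_mem : ∀ x ∈ T.P, ΔP x ∈ T.PP
  SP_mem : ∀ x ∈ T.P, SP x ∈ T.P
  mul_dual : ∀ x ∈ T.P, ∀ x' ∈ T.P, ∀ w ∈ T.Q,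
      T.pairNV (x * x') w = pairT (T.pairL x) (T.pairL x') (tΔ D w)
  ΔP_dual : ∀ x ∈ T.P, ∀ w ∈ T.Q, ∀ w' ∈ T.Q,
      pairT (T.pairR w) (T.pairR w') (ΔP x) = T.pairNV x (w * w')
  εP_dual : ∀ x ∈ T.P, εP x = T.pairNV x 1
  one_dual : ∀ w ∈ T.Q, T.pairNV 1 w = tε D w
  SP_dual : ∀ x ∈ T.P, ∀ w ∈ T.Q, T.pairNV (SP x) w = T.pairNV x (tS D w)

end JonesTower

/-!
Write `Φ(X) = ∑ᵢ λᵢ X λᵢ*`; on `A₁` the reflection is `r⁻₁(w) = τ⁻¹ Φ(e₁e₂we₁)`.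
If `w ∈ A' ∩ A₁`, then `X = e₁e₂we₁` commutes with `B`, so `Φ(X)` commutes with `A`, and the
quasi-basis relations give `e₁Φ(X) = X = Φ(X)e₁`; since `A₁` is generated by `A` and `e₁`,
`r⁻₁(w) ∈ A₁' ∩ A₂`. Conversely, for `z ∈ A₁' ∩ A₂` put `w = τ⁻¹E₂(e₂z) ∈ A' ∩ A₁`. On the
*-algebra generated by `A₁` and `e₂` one has `e₂x ∈ e₂A₁`, and `E₂` is positive, hence continuous
on `A₂`; by density `e₂w = e₂z`. With `e₁e₂e₁ = τe₁` this gives `r⁻₁(w) = Φ(e₁)z = z`.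
The identities `e₁e₂e₁ = τe₁` and `Φ(e₁) = 1` hold because a conditional expectation with a
quasi-basis is faithful, and it kills the projections `e₁ - τ⁻¹e₁e₂e₁` and `1 - Φ(e₁)`.
-/

theorem eq_zero_of_forall_add_smul_eq_star_mul_self {C : Type*} [CStarAlgebra C] {a b : C}
    (h : ∀ t : ℝ, ∃ c : C, a + (t : ℂ) • b = star c * c) : b = 0 := by
  let _ := CStarAlgebra.spectralOrder C
  have _ := CStarAlgebra.spectralOrderedRing C
  have hnonneg (t : ℝ) : 0 ≤ a + (t : ℂ) • b := by
    obtain ⟨c, hc⟩ := h t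
    exact hc ▸ star_mul_self_nonneg c
  have hbound (t : ℝ) : ‖(t : ℂ) • b‖ ≤ 3 * ‖a‖ := by
    have hle : a + (t : ℂ) • b ≤ a + a := by
      have := hnonneg (-t)
      rw [Complex.ofReal_neg, neg_smul, ← sub_eq_add_neg, sub_nonneg] at this
      exact add_le_add_right this a
    have := CStarAlgebra.norm_le_norm_of_nonneg_of_le (hnonneg t) hle
    calc ‖(t : ℂ) • b‖ = ‖(a + (t : ℂ) • b) - a‖ := by rw [add_sub_cancel_left]
      _ ≤ ‖a + a‖ + ‖a‖ := (norm_sub_le _ _).trans (by gcongr)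
      _ ≤ 3 * ‖a‖ := by linarith [norm_add_le a a]
  by_contra hb
  have hb : 0 < ‖b‖ := norm_pos_iff.mpr hb
  have := hbound ((3 * ‖a‖ + 1) / ‖b‖)
  rw [norm_smul, Complex.norm_real, Real.norm_of_nonneg (by positivity),
    div_mul_cancel₀ _ hb.ne'] at this
  linarith

theorem commute_of_mem_topologicalClosure_adjoin {C : Type*} [CStarAlgebra C] {s : Set C}
    {r m : C} (hr : r ∈ StarSubalgebra.centralizer ℂ s)
    (hm : m ∈ (StarAlgebra.adjoin ℂ s).topologicalClosure) : m * r = r * m :=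
  ((StarSubalgebra.mem_centralizer_iff ℂ).mp
    (StarSubalgebra.topologicalClosure_adjoin_le_centralizer_centralizer ℂ s hm) r hr).1.symm

theorem mem_algebra_adjoin_of_mem_starAlgebra_adjoin {C : Type*} [CStarAlgebra C] {s : Set C}
    (hs : star s ⊆ s) {x : C} (hx : x ∈ StarAlgebra.adjoin ℂ s) : x ∈ Algebra.adjoin ℂ s := by
  rwa [← Set.union_eq_left.mpr hs, ← StarAlgebra.adjoin_toSubalgebra]

namespace CondExpOn

variable {C : Type*} [CStarAlgebra C] {A B : StarSubalgebra ℂ C} (E : CondExpOn C A B)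

theorem map_mul_left {b x : C} (hb : b ∈ B) (hx : x ∈ A) : E.map (b * x) = b * E.map x := by
  simpa using E.bimodule b hb 1 (one_mem _) x hx

theorem map_mul_right {b x : C} (hb : b ∈ B) (hx : x ∈ A) : E.map (x * b) = E.map x * b := by
  simpa using E.bimodule 1 (one_mem _) b hb x hx

theorem continuousOn_map (hA : IsClosed (A : Set C)) : ContinuousOn E.map A := by
  have := hA
  let _ := CStarAlgebra.spectralOrder C
  have _ := CStarAlgebra.spectralOrderedRing C
  let _ := CStarAlgebra.spectralOrder A
  have _ := CStarAlgebra.spectralOrderedRing A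
  let f : A →ₚ[ℂ] C := .mk₀ (E.map ∘ₗ A.subtype.toLinearMap) fun x hx => by
    obtain ⟨c, rfl⟩ := CStarAlgebra.nonneg_iff_eq_star_mul_self.mp hx
    obtain ⟨d, -, hd⟩ := E.positive c c.2
    simp [hd]
  exact continuousOn_iff_continuous_domRestrict.mpr (map_continuous f)

-- `E((u + t x)*(u + t x)) ≥ 0` for all real `t`, and the `t²`-term vanishes.
theorem map_add_map_eq_zero {x u : C} (hx : x ∈ A) (hu : u ∈ A)
    (h : E.map (star x * x) = 0) : E.map (star u * x) + E.map (star x * u) = 0 := by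
  refine eq_zero_of_forall_add_smul_eq_star_mul_self (a := E.map (star u * u)) fun t => ?_
  obtain ⟨c, -, hc⟩ := E.positive _ (add_mem hu (SMulMemClass.smul_mem (t : ℂ) hx))
  refine ⟨c, ?_⟩
  have hexpand : star (u + (t : ℂ) • x) * (u + (t : ℂ) • x) = star u * u
      + (t : ℂ) • (star u * x + star x * u) + ((t : ℂ) * t) • (star x * x) := by
    simp only [star_add, star_smul, Complex.star_def, Complex.conj_ofReal, add_mul, mul_add,
      smul_mul_assoc, mul_smul_comm, smul_smul, smul_add]
    abel
  rw [← hc, hexpand, map_add, map_add, map_smul, map_smul, h, smul_zero, add_zero, map_add]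

theorem map_star_mul_eq_zero {x y : C} (hx : x ∈ A) (hy : y ∈ A)
    (h : E.map (star x * x) = 0) : E.map (star y * x) = 0 := by
  have h₁ := E.map_add_map_eq_zero hx hy h
  have h₂ := E.map_add_map_eq_zero hx (SMulMemClass.smul_mem Complex.I hy) h
  simp only [star_smul, Complex.star_def, Complex.conj_I, smul_mul_assoc, mul_smul_comm,
    map_smul] at h₂
  have : (2 * Complex.I) • E.map (star y * x) = 0 := by
    linear_combination (norm := module) Complex.I • h₁ - h₂
  simpa using this

theorem eq_zero_of_map_star_mul_self_eq_zero {n : ℕ} {v : Fin n → C}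
    (hv : IsQuasiBasisOn E.map A v) {x : C} (hx : x ∈ A) (h : E.map (star x * x) = 0) :
    x = 0 := by
  rw [← hv.left x hx]
  exact Finset.sum_eq_zero fun i _ => by rw [E.map_star_mul_eq_zero hx (hv.mem i) h, mul_zero]

theorem eq_zero_of_isStarProjection {n : ℕ} {v : Fin n → C}
    (hv : IsQuasiBasisOn E.map A v) {p : C} (hp : p ∈ A) (hproj : IsStarProjection p)
    (h : E.map p = 0) : p = 0 :=
  E.eq_zero_of_map_star_mul_self_eq_zero hv hp <| by
    rwa [hproj.isSelfAdjoint.star_eq, hproj.isIdempotentElem.eq]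

end CondExpOn

namespace JonesTower

variable {C : Type*} [CStarAlgebra C] (T : JonesTower C)

theorem tau_ne_zero : (T.τ : ℂ) ≠ 0 := Complex.ofReal_ne_zero.mpr T.τ_pos.ne'

theorem lam_mem (i : Fin T.nl) : T.lam i ∈ T.A := T.lam_qb.mem i

theorem isStarProjection_e1 : IsStarProjection T.e1 := ⟨T.e1_idem, T.e1_star⟩

theorem e1_mem_A2 : T.e1 ∈ T.A2 := T.hA1A2 T.e1_mem

theorem A2_isClosed : IsClosed (T.A2 : Set C) :=
  T.gen2 ▸ StarSubalgebra.isClosed_topologicalClosure _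

theorem e2_mul_e1_mul_e2 : T.e2 * T.e1 * T.e2 = (T.τ : ℂ) • T.e2 := by
  rw [T.e2_jones _ T.e1_mem, T.E1_e1, smul_mul_assoc, one_mul]

theorem E2_map_mul_e2_mul {b b' : C} (hb : b ∈ T.A1) (hb' : b' ∈ T.A1) :
    T.E2.map (b * T.e2 * b') = (T.τ : ℂ) • (b * b') := by
  rw [T.E2.bimodule b hb b' hb' T.e2 T.e2_mem, T.E2_e2, mul_smul_comm, mul_one, smul_mul_assoc]

theorem e1_mul_e2_mul_e1 : T.e1 * T.e2 * T.e1 = (T.τ : ℂ) • T.e1 := by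
  obtain ⟨n, v, hv⟩ := T.qb2
  have hsq : T.e1 * T.e2 * T.e1 * (T.e1 * T.e2 * T.e1) = (T.τ : ℂ) • (T.e1 * T.e2 * T.e1) := by
    calc _ = T.e1 * (T.e2 * (T.e1 * T.e1) * T.e2) * T.e1 := by simp only [mul_assoc]
      _ = _ := by rw [T.e1_idem, T.e2_mul_e1_mul_e2, mul_smul_comm, smul_mul_assoc]
  set q := (T.τ : ℂ)⁻¹ • (T.e1 * T.e2 * T.e1)
  have hq : IsStarProjection q := by
    refine ⟨?_, ?_⟩
    · rw [IsIdempotentElem, smul_mul_smul_comm, hsq, smul_smul, mul_assoc,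
        inv_mul_cancel₀ T.tau_ne_zero, mul_one]
    · refine .smul (by simp [IsSelfAdjoint]) ?_
      simpa [T.e1_star] using IsSelfAdjoint.conjugate (T.e2_star : IsSelfAdjoint T.e2) T.e1
  have hqe1 : q * T.e1 = q := by
    rw [smul_mul_assoc, mul_assoc _ T.e1, T.e1_idem]
  have hE2 : T.E2.map (T.e1 - q) = 0 := by
    rw [map_sub, map_smul, T.E2_map_mul_e2_mul T.e1_mem T.e1_mem, T.e1_idem, smul_smul,
      inv_mul_cancel₀ T.tau_ne_zero, one_smul, T.E2.fixes _ T.e1_mem, sub_self]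
  have hmem : T.e1 - q ∈ T.A2 := sub_mem T.e1_mem_A2 <| SMulMemClass.smul_mem _ <|
    mul_mem (mul_mem T.e1_mem_A2 T.e2_mem) T.e1_mem_A2
  have := T.E2.eq_zero_of_isStarProjection hv hmem
    (hq.sub_of_mul_eq_left T.isStarProjection_e1 hqe1) hE2
  calc T.e1 * T.e2 * T.e1 = (T.τ : ℂ) • q := (smul_inv_smul₀ T.tau_ne_zero _).symm
    _ = (T.τ : ℂ) • T.e1 := by rw [← sub_eq_zero.mp this]

theorem exists_e2_mul_mul_eq_e2_mul {x : C} (hx : x ∈ Algebra.adjoin ℂ ((T.A1 : Set C) ∪ {T.e2}))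
    {y : C} (hy : y ∈ T.A1) : ∃ y' ∈ T.A1, T.e2 * (y * x) = T.e2 * y' := by
  induction hx using Algebra.adjoin_induction generalizing y with
  | mem z hz =>
    rcases hz with hz | rfl
    · exact ⟨y * z, mul_mem hy hz, rfl⟩
    · refine ⟨T.E1.map y, T.hAA1 (T.E1.mem_of_mem y hy), ?_⟩
      rw [← mul_assoc, T.e2_jones y hy, T.e2_comm _ (T.E1.mem_of_mem y hy)]
  | algebraMap c => exact ⟨y * algebraMap ℂ C c, mul_mem hy (algebraMap_mem _ c), rfl⟩
  | add x₁ x₂ _ _ h₁ h₂ =>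
    obtain ⟨y₁, hy₁, h₁⟩ := h₁ hy
    obtain ⟨y₂, hy₂, h₂⟩ := h₂ hy
    exact ⟨y₁ + y₂, add_mem hy₁ hy₂, by rw [mul_add, mul_add, h₁, h₂, mul_add]⟩
  | mul x₁ x₂ _ _ h₁ h₂ =>
    obtain ⟨y₁, hy₁, h₁⟩ := h₁ hy
    obtain ⟨y₂, hy₂, h₂⟩ := h₂ hy₁
    exact ⟨y₂, hy₂, by rw [← mul_assoc, ← mul_assoc, mul_assoc T.e2, h₁, mul_assoc, h₂]⟩

theorem e2_mul_E2_map_e2_mul {x : C} (hx : x ∈ T.A2) :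
    T.e2 * T.E2.map (T.e2 * x) = (T.τ : ℂ) • (T.e2 * x) := by
  set D := StarAlgebra.adjoin ℂ ((T.A1 : Set C) ∪ {T.e2})
  have hstar : star ((T.A1 : Set C) ∪ {T.e2}) ⊆ (T.A1 : Set C) ∪ {T.e2} := by
    rw [Set.union_star, StarMemClass.star_coe_eq, Set.star_singleton, T.e2_star]
  have hD : ∀ x ∈ D, T.e2 * T.E2.map (T.e2 * x) = (T.τ : ℂ) • (T.e2 * x) := by
    intro x hx
    obtain ⟨y, hy, hxy⟩ :=
      T.exists_e2_mul_mul_eq_e2_mul (mem_algebra_adjoin_of_mem_starAlgebra_adjoin hstar hx)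
        (one_mem _)
    rw [one_mul] at hxy
    rw [hxy, T.E2.map_mul_right hy T.e2_mem, T.E2_e2, smul_mul_assoc, one_mul, mul_smul_comm]
  have hA2 : (T.A2 : Set C) = closure D := by rw [T.gen2]; rfl
  have hcont : ContinuousOn (fun x => T.e2 * T.E2.map (T.e2 * x)) T.A2 :=
    continuousOn_const.mul <| (T.E2.continuousOn_map T.A2_isClosed).comp
      (continuous_const_mul T.e2).continuousOn fun x hx => mul_mem T.e2_mem hx
  exact Set.EqOn.of_subset_closure hD hcont (by fun_prop) (hA2 ▸ subset_closure) hA2.le hx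

def lamConj (X : C) : C := ∑ i, T.lam i * X * star (T.lam i)

theorem lamConj_smul (c : ℂ) (X : C) : T.lamConj (c • X) = c • T.lamConj X := by
  simp only [lamConj, mul_smul_comm, smul_mul_assoc, Finset.smul_sum]

theorem lamConj_mul_of_commute (X : C) {z : C} (hz : ∀ i, Commute z (star (T.lam i))) :
    T.lamConj (X * z) = T.lamConj X * z := by
  rw [lamConj, lamConj, Finset.sum_mul]
  exact Finset.sum_congr rfl fun i _ => by simp only [mul_assoc, (hz i).eq]

theorem lamConj_e1_mul_mul_e1 {a : C} (ha : a ∈ T.A) :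
    T.lamConj T.e1 * (a * T.e1) = a * T.e1 := by
  calc T.lamConj T.e1 * (a * T.e1) = ∑ i, T.lam i * (T.e1 * (star (T.lam i) * a) * T.e1) := by
        simp only [lamConj, Finset.sum_mul, mul_assoc]
    _ = (∑ i, T.lam i * T.E0.map (star (T.lam i) * a)) * T.e1 := by
        simp only [T.e1_jones _ (mul_mem (star_mem (T.lam_mem _)) ha), Finset.sum_mul, mul_assoc]
    _ = a * T.e1 := by rw [T.lam_qb.left a ha]

theorem lamConj_e1 : T.lamConj T.e1 = 1 := by
  obtain ⟨n, v, hv⟩ := T.qb1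
  have hproj : IsStarProjection (T.lamConj T.e1) := by
    refine ⟨?_, ?_⟩
    · calc T.lamConj T.e1 * T.lamConj T.e1
          = ∑ i, T.lamConj T.e1 * (T.lam i * T.e1) * star (T.lam i) := by
            simp only [lamConj, Finset.mul_sum, mul_assoc]
        _ = T.lamConj T.e1 := by
            simp only [T.lamConj_e1_mul_mul_e1 (T.lam_mem _)]
            rfl
    · simp only [IsSelfAdjoint, lamConj, star_sum, star_mul, star_star, T.e1_star, mul_assoc]
  have hE1 : T.E1.map (T.lamConj T.e1) = 1 := by
    simp only [lamConj, map_sum, T.E1.bimodule _ (T.lam_mem _) _ (star_mem (T.lam_mem _)) _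
      T.e1_mem, T.E1_e1, mul_smul_comm, mul_one, smul_mul_assoc, ← Finset.smul_sum, T.lam_index,
      smul_smul, Complex.ofReal_inv, mul_inv_cancel₀ T.tau_ne_zero, one_smul]
  have hmem : 1 - T.lamConj T.e1 ∈ T.A1 := sub_mem (one_mem _) <| sum_mem fun i _ =>
    mul_mem (mul_mem (T.hAA1 (T.lam_mem i)) T.e1_mem) (T.hAA1 (star_mem (T.lam_mem i)))
  have := T.E1.eq_zero_of_isStarProjection hv hmem hproj.one_sub
    (by rw [map_sub, hE1, T.E1.fixes 1 (one_mem _), sub_self])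
  exact (sub_eq_zero.mp this).symm

theorem commute_lamConj {X : C} (hX : ∀ b ∈ T.B, Commute b X) {a : C} (ha : a ∈ T.A) :
    Commute a (T.lamConj X) := by
  have hB (i j : Fin T.nl) : T.E0.map (star (T.lam j) * a * T.lam i) ∈ T.B :=
    T.E0.mem_of_mem _ (mul_mem (mul_mem (star_mem (T.lam_mem j)) ha) (T.lam_mem i))
  calc a * T.lamConj X
      = ∑ i, (∑ j, T.lam j * T.E0.map (star (T.lam j) * a * T.lam i)) * X * star (T.lam i) := by
        refine (Finset.mul_sum _ _ _).trans (Finset.sum_congr rfl fun i _ => ?_)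
        simp only [mul_assoc, T.lam_qb.left _ (mul_mem ha (T.lam_mem i))]
    _ = ∑ j, T.lam j * X * ∑ i, T.E0.map (star (T.lam j) * a * T.lam i) * star (T.lam i) := by
        simp only [Finset.sum_mul, Finset.mul_sum]
        refine Finset.sum_comm.trans (Finset.sum_congr rfl fun j _ => Finset.sum_congr rfl
          fun i _ => ?_)
        rw [mul_assoc (T.lam j), (hX _ (hB i j)).eq]
        simp only [mul_assoc]
    _ = T.lamConj X * a := by
        refine .trans (Finset.sum_congr rfl fun j _ => ?_) (Finset.sum_mul _ _ _).symm
        rw [T.lam_qb.right _ (mul_mem (star_mem (T.lam_mem j)) ha)]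
        simp only [mul_assoc]

theorem e1_mul_lamConj_e1_mul {Y : C} (hY : ∀ b ∈ T.B, Commute b Y) :
    T.e1 * T.lamConj (T.e1 * Y) = T.e1 * Y := by
  calc T.e1 * T.lamConj (T.e1 * Y)
      = T.e1 * Y * ∑ i, T.E0.map (T.lam i) * star (T.lam i) := by
        refine (Finset.mul_sum _ _ _).trans (.trans (Finset.sum_congr rfl fun i _ => ?_)
          (Finset.mul_sum _ _ _).symm)
        have hB : T.E0.map (T.lam i) ∈ T.B := T.E0.mem_of_mem _ (T.lam_mem i)
        calc T.e1 * (T.lam i * (T.e1 * Y) * star (T.lam i))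
            = T.e1 * T.lam i * T.e1 * Y * star (T.lam i) := by simp only [mul_assoc]
          _ = T.E0.map (T.lam i) * (T.e1 * Y) * star (T.lam i) := by
            rw [T.e1_jones _ (T.lam_mem i), mul_assoc (T.E0.map _)]
          _ = T.e1 * Y * (T.E0.map (T.lam i) * star (T.lam i)) := by
            rw [(Commute.mul_right (T.e1_comm _ hB).symm (hY _ hB)).eq, mul_assoc]
    _ = T.e1 * Y := by
        rw [(by simpa using T.lam_qb.right 1 (one_mem _) :
          ∑ i, T.E0.map (T.lam i) * star (T.lam i) = 1), mul_one]

theorem lamConj_mul_e1_mul_e1 {Y : C} (hY : ∀ b ∈ T.B, Commute b Y) :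
    T.lamConj (Y * T.e1) * T.e1 = Y * T.e1 := by
  calc T.lamConj (Y * T.e1) * T.e1
      = (∑ i, T.lam i * T.E0.map (star (T.lam i))) * (Y * T.e1) := by
        refine (Finset.sum_mul _ _ _).trans (.trans (Finset.sum_congr rfl fun i _ => ?_)
          (Finset.sum_mul _ _ _).symm)
        have hB : T.E0.map (star (T.lam i)) ∈ T.B :=
          T.E0.mem_of_mem _ (star_mem (T.lam_mem i))
        calc T.lam i * (Y * T.e1) * star (T.lam i) * T.e1
            = T.lam i * (Y * (T.e1 * star (T.lam i) * T.e1)) := by simp only [mul_assoc]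
          _ = T.lam i * (T.E0.map (star (T.lam i)) * (Y * T.e1)) := by
            rw [T.e1_jones _ (star_mem (T.lam_mem i)), (hY _ hB).symm.left_comm]
          _ = T.lam i * T.E0.map (star (T.lam i)) * (Y * T.e1) := (mul_assoc _ _ _).symm
    _ = Y * T.e1 := by
        rw [(by simpa using T.lam_qb.left 1 (one_mem _) :
          ∑ i, T.lam i * T.E0.map (star (T.lam i)) = 1), one_mul]

theorem rminus_eq_lamConj {w : C} (hw : w ∈ T.A1) :
    T.rminus w = (T.τ : ℂ)⁻¹ • T.lamConj (T.e1 * T.e2 * w * T.e1) := by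
  have hterm (i : Fin T.nl) : T.lam i * T.e1 * T.e2 * T.E2.map (w * T.e1 * T.e2 * star (T.lam i))
      = (T.τ : ℂ) • (T.lam i * (T.e1 * T.e2 * w * T.e1) * star (T.lam i)) := by
    rw [T.E2_map_mul_e2_mul (mul_mem hw T.e1_mem) (star_mem (T.hAA1 (T.lam_mem i))),
      mul_smul_comm]
    simp only [mul_assoc]
  rw [rminus, Finset.sum_congr rfl fun i _ => hterm i, ← Finset.smul_sum, smul_smul, sq,
    mul_assoc, inv_mul_cancel₀ T.tau_ne_zero, mul_one, lamConj]

theorem rminus_mem_relativeCommutant {w : C} (hw : w ∈ relativeCommutant T.A T.A1) :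
    T.rminus w ∈ relativeCommutant T.A1 T.A2 := by
  obtain ⟨hwA1, hwA⟩ := hw
  have hbe1 (b : C) (hb : b ∈ T.B) : Commute b T.e1 := (T.e1_comm b hb).symm
  have hbe2 (b : C) (hb : b ∈ T.B) : Commute b T.e2 := (T.e2_comm b (T.hBA hb)).symm
  have hbw (b : C) (hb : b ∈ T.B) : Commute b w := hwA b (T.hBA hb)
  set X := T.e1 * T.e2 * w * T.e1
  have hX (b : C) (hb : b ∈ T.B) : Commute b X :=
    (((hbe1 b hb).mul_right (hbe2 b hb)).mul_right (hbw b hb)).mul_right (hbe1 b hb)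
  have he1X : T.e1 * T.lamConj X = X := by
    simpa only [X, mul_assoc] using T.e1_mul_lamConj_e1_mul (Y := T.e2 * w * T.e1)
      fun b hb => ((hbe2 b hb).mul_right (hbw b hb)).mul_right (hbe1 b hb)
  have hXe1 : T.lamConj X * T.e1 = X := by
    simpa only [X, mul_assoc] using T.lamConj_mul_e1_mul_e1 (Y := T.e1 * T.e2 * w)
      fun b hb => ((hbe1 b hb).mul_right (hbe2 b hb)).mul_right (hbw b hb)
  have hcent : T.lamConj X ∈ StarSubalgebra.centralizer ℂ ((T.A : Set C) ∪ {T.e1}) := by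
    refine (StarSubalgebra.mem_centralizer_iff ℂ).mpr fun g hg => ?_
    rcases hg with hg | rfl
    · exact ⟨T.commute_lamConj hX hg, T.commute_lamConj hX (star_mem hg)⟩
    · rw [T.e1_star, he1X, hXe1]
      exact ⟨rfl, rfl⟩
  have hXA2 : X ∈ T.A2 :=
    mul_mem (mul_mem (mul_mem T.e1_mem_A2 T.e2_mem) (T.hA1A2 hwA1)) T.e1_mem_A2
  rw [T.rminus_eq_lamConj hwA1]
  refine ⟨SMulMemClass.smul_mem _ (sum_mem fun i _ => ?_), fun m hm => ?_⟩
  · have hlam : T.lam i ∈ T.A2 := T.hA1A2 (T.hAA1 (T.lam_mem i))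
    exact mul_mem (mul_mem hlam hXA2) (star_mem hlam)
  · rw [mul_smul_comm, smul_mul_assoc,
      commute_of_mem_topologicalClosure_adjoin hcent (T.gen1 ▸ hm)]

theorem exists_rminus_eq {z : C} (hz : z ∈ relativeCommutant T.A1 T.A2) :
    ∃ w ∈ relativeCommutant T.A T.A1, T.rminus w = z := by
  obtain ⟨hzA2, hzA1⟩ := hz
  have he2z : T.e2 * z ∈ T.A2 := mul_mem T.e2_mem hzA2
  set w := (T.τ : ℂ)⁻¹ • T.E2.map (T.e2 * z)
  have hwA1 : w ∈ T.A1 := SMulMemClass.smul_mem _ (T.E2.mem_of_mem _ he2z)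
  have he2w : T.e2 * w = T.e2 * z := by
    rw [mul_smul_comm, T.e2_mul_E2_map_e2_mul hzA2, inv_smul_smul₀ T.tau_ne_zero]
  refine ⟨w, ⟨hwA1, fun a ha => ?_⟩, ?_⟩
  · have ha' : a * (T.e2 * z) = T.e2 * z * a := by
      rw [← mul_assoc, ← T.e2_comm a ha, mul_assoc, hzA1 a (T.hAA1 ha), mul_assoc]
    rw [mul_smul_comm, smul_mul_assoc, ← T.E2.map_mul_left (T.hAA1 ha) he2z,
      ← T.E2.map_mul_right (T.hAA1 ha) he2z, ha']
  · have hX : T.e1 * T.e2 * w * T.e1 = (T.τ : ℂ) • (T.e1 * z) :=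
      calc T.e1 * T.e2 * w * T.e1 = T.e1 * (T.e2 * w) * T.e1 := by simp only [mul_assoc]
        _ = T.e1 * T.e2 * (z * T.e1) := by rw [he2w]; simp only [mul_assoc]
        _ = T.e1 * T.e2 * T.e1 * z := by rw [← hzA1 _ T.e1_mem]; simp only [mul_assoc]
        _ = (T.τ : ℂ) • (T.e1 * z) := by rw [T.e1_mul_e2_mul_e1, smul_mul_assoc]
    calc T.rminus w = (T.τ : ℂ)⁻¹ • T.lamConj ((T.τ : ℂ) • (T.e1 * z)) := by
          rw [T.rminus_eq_lamConj hwA1, hX]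
      _ = T.lamConj T.e1 * z := by
          rw [lamConj_smul, inv_smul_smul₀ T.tau_ne_zero, lamConj_mul_of_commute]
          exact fun i => (hzA1 _ (star_mem (T.hAA1 (T.lam_mem i)))).symm
      _ = z := by rw [T.lamConj_e1, one_mul]

end JonesTower

/-- Let `B ⊂ A` be an inclusion of simple unital C*-algebras with a
conditional expectation of index-finite type.  Then the reflection operator `r⁻₁` maps
`A' ∩ A₁` onto `A₁' ∩ A₂`. -/
theorem statement_12 {C : Type*} [CStarAlgebra C] (T : JonesTower C) :
    T.rminus '' (relativeCommutant T.A T.A1 : Set C)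
      = (relativeCommutant T.A1 T.A2 : Set C) :=
  (Set.image_subset_iff.mpr fun _ => T.rminus_mem_relativeCommutant).antisymm
    fun _ => T.exists_rminus_eq
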